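/- Let D be a positive integer, let a ∈ ℝ^D with a_d > 0, let g : ℝ → ℝ be concave, nondecreasing and continuous, and set u(x) = g(∑_d a_d x_d). Let q ∈ ℝ^D with q_d > 0 for all d and let λ ≥ 1. Then for every y ∈ 𝒟(u, q) there exists y' ∈ 𝒟(u, λq) with y' ≤ y componentwise. -/

import Mathlib

/-!
Let `z` be demanded at the prices `λ q`. If its level `a ⬝ᵥ z` is at most that of `y`, slide
`y ⊓ z` towards `y` until it reaches level `a ⬝ᵥ z`: the resulting `w ≤ y` and the complementary
bundle `y + z - w` stay in the box, and since `y + z - w` has the level of `y`, optimality of `y`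
at `q` forces `q ⬝ᵥ w ≤ q ⬝ᵥ z`; so `w` does at least as well as `z` at `λ q`. If the level of
`z` is larger, the same exchange shows `q ⬝ᵥ y ≤ q ⬝ᵥ z`, and raising prices by the factor
`λ ≥ 1` penalises `z` more than `y`, so `y` itself stays demanded.
-/

/-- The demand set `𝒟(u, q)`: maximizers of the quasi-linear utility
`x ↦ u x - q·x` over the box `[0,1]^D`. -/
def demandSet {D : ℕ} (u : (Fin D → ℝ) → ℝ) (q : Fin D → ℝ) : Set (Fin D → ℝ) :=
  {x | x ∈ Set.Icc (0 : Fin D → ℝ) 1 ∧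
    ∀ y ∈ Set.Icc (0 : Fin D → ℝ) 1,
      u y - ∑ d, q d * y d ≤ u x - ∑ d, q d * x d}

open Set Matrix

theorem exists_mem_Icc_dotProduct_eq_of_dotProduct_le {ι : Type*} [Fintype ι] {a x y : ι → ℝ}
    (ha : 0 ≤ a) (hx : x ∈ Icc 0 1) (hy : y ∈ Icc 0 1) (hxy : a ⬝ᵥ x ≤ a ⬝ᵥ y) :
    ∃ w ∈ Icc 0 y, a ⬝ᵥ w = a ⬝ᵥ x ∧ x + y - w ∈ Icc 0 1 := by
  have hm : x ⊓ y ∈ Icc 0 y := ⟨le_inf hx.1 hy.1, inf_le_right⟩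
  have hM : x ⊔ y ∈ Icc 0 1 := ⟨hx.1.trans le_sup_left, sup_le hx.2 hy.2⟩
  have hlevel : a ⬝ᵥ x ∈ (dotProductBilin ℝ ℝ a).toAffineMap '' segment ℝ (x ⊓ y) y := by
    have hmx : a ⬝ᵥ (x ⊓ y) ≤ a ⬝ᵥ x := dotProduct_le_dotProduct_of_nonneg_left inf_le_left ha
    rw [image_segment, LinearMap.coe_toAffineMap, dotProductBilin_apply_apply,
      dotProductBilin_apply_apply, segment_eq_Icc (hmx.trans hxy)]
    exact ⟨hmx, hxy⟩
  obtain ⟨_, ⟨s, t, hs, ht, hst, rfl⟩, hw⟩ := hlevel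
  refine ⟨s • (x ⊓ y) + t • y, convex_Icc 0 y hm ⟨hy.1, le_rfl⟩ hs ht hst, hw, ?_⟩
  have hcompl : x + y - (s • (x ⊓ y) + t • y) = s • (x ⊔ y) + t • x := by
    linear_combination (norm := module) (-s) • inf_add_sup x y - hst • (x + y)
  rw [hcompl]
  exact convex_Icc 0 1 hM hx hs ht hst

section Demand

variable {D : ℕ}

theorem demandSet_nonempty {u : (Fin D → ℝ) → ℝ} (hu : ContinuousOn u (Icc 0 1))
    (q : Fin D → ℝ) : (demandSet u q).Nonempty := by
  obtain ⟨x, hx, hmax⟩ := isCompact_Icc.exists_isMaxOn (nonempty_Icc.2 zero_le_one)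
    (hu.sub (continuous_const.dotProduct continuous_id).continuousOn)
  exact ⟨x, hx, fun y hy => hmax hy⟩

theorem mem_demandSet_of_le {u : (Fin D → ℝ) → ℝ} {q x z : Fin D → ℝ}
    (hz : z ∈ demandSet u q) (hx : x ∈ Icc 0 1) (hzx : u z - q ⬝ᵥ z ≤ u x - q ⬝ᵥ x) :
    x ∈ demandSet u q :=
  ⟨hx, fun y hy => (hz.2 y hy).trans hzx⟩

variable {a : Fin D → ℝ} {g : ℝ → ℝ} {q y z : Fin D → ℝ}

theorem dotProduct_le_of_mem_demandSet_of_dotProduct_eq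
    (hy : y ∈ demandSet (fun x => g (a ⬝ᵥ x)) q) (hz : z ∈ Icc 0 1) (hzy : a ⬝ᵥ z = a ⬝ᵥ y) :
    q ⬝ᵥ y ≤ q ⬝ᵥ z := by
  have hopt : g (a ⬝ᵥ z) - q ⬝ᵥ z ≤ g (a ⬝ᵥ y) - q ⬝ᵥ y := hy.2 z hz
  rw [hzy] at hopt
  linarith

theorem exists_le_mem_demandSet_smul_of_dotProduct_le {lam : ℝ} (ha : 0 ≤ a) (hlam : 0 ≤ lam)
    (hy : y ∈ demandSet (fun x => g (a ⬝ᵥ x)) q)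
    (hz : z ∈ demandSet (fun x => g (a ⬝ᵥ x)) (lam • q)) (hzy : a ⬝ᵥ z ≤ a ⬝ᵥ y) :
    ∃ w ∈ demandSet (fun x => g (a ⬝ᵥ x)) (lam • q), w ≤ y := by
  obtain ⟨w, ⟨hw0, hwy⟩, hwz, hcompl⟩ :=
    exists_mem_Icc_dotProduct_eq_of_dotProduct_le ha hz.1 hy.1 hzy
  have hcost : q ⬝ᵥ w ≤ q ⬝ᵥ z := by
    have hcompl_cost := dotProduct_le_of_mem_demandSet_of_dotProduct_eq hy hcompl
      (by simp only [dotProduct_add, dotProduct_sub, hwz]; ring)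
    simp only [dotProduct_add, dotProduct_sub] at hcompl_cost
    linarith
  refine ⟨w, mem_demandSet_of_le hz ⟨hw0, hwy.trans hy.1.2⟩ ?_, hwy⟩
  simp only [hwz, smul_dotProduct, smul_eq_mul]
  gcongr

theorem mem_demandSet_smul_of_dotProduct_le {lam : ℝ} (ha : 0 ≤ a) (hq : 0 ≤ q) (hlam : 1 ≤ lam)
    (hy : y ∈ demandSet (fun x => g (a ⬝ᵥ x)) q)
    (hz : z ∈ demandSet (fun x => g (a ⬝ᵥ x)) (lam • q)) (hyz : a ⬝ᵥ y ≤ a ⬝ᵥ z) :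
    y ∈ demandSet (fun x => g (a ⬝ᵥ x)) (lam • q) := by
  obtain ⟨w, ⟨hw0, hwz⟩, hwy, -⟩ := exists_mem_Icc_dotProduct_eq_of_dotProduct_le ha hy.1 hz.1 hyz
  have hcost : q ⬝ᵥ y ≤ q ⬝ᵥ z :=
    (dotProduct_le_of_mem_demandSet_of_dotProduct_eq hy ⟨hw0, hwz.trans hz.1.2⟩ hwy).trans
      (dotProduct_le_dotProduct_of_nonneg_left hwz hq)
  have hopt : g (a ⬝ᵥ z) - q ⬝ᵥ z ≤ g (a ⬝ᵥ y) - q ⬝ᵥ y := hy.2 z hz.1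
  refine mem_demandSet_of_le hz hy.1 ?_
  simp only [smul_dotProduct, smul_eq_mul]
  linarith [mul_le_mul_of_nonneg_left hcost (sub_nonneg.2 hlam)]

end Demand

theorem demand_decreases_under_uniform_price_scaling_general
    (D : ℕ)
    (a : Fin D → ℝ) (ha : ∀ d, 0 < a d)
    (g : ℝ → ℝ)
    (hgcont : Continuous g)
    (q : Fin D → ℝ) (hq : ∀ d, 0 < q d)
    (lam : ℝ) (hlam : 1 ≤ lam) :
    ∀ y ∈ demandSet (fun x => g (∑ d, a d * x d)) q,
      ∃ y' ∈ demandSet (fun x => g (∑ d, a d * x d)) (fun d => lam * q d),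
        y' ≤ y := by
  intro y hy
  have ha₀ : 0 ≤ a := fun d => (ha d).le
  obtain ⟨z, hz⟩ := demandSet_nonempty (u := fun x => g (a ⬝ᵥ x))
    (hgcont.comp (continuous_const.dotProduct continuous_id)).continuousOn (lam • q)
  rcases le_total (a ⬝ᵥ z) (a ⬝ᵥ y) with hzy | hyz
  · exact exists_le_mem_demandSet_smul_of_dotProduct_le ha₀ (by linarith) hy hz hzy
  · exact ⟨y, mem_demandSet_smul_of_dotProduct_le ha₀ (fun d => (hq d).le) hlam hy hz hyz, le_rfl⟩

/-- for `u x = g (∑ d, a d * x d)` with `g` concave, nondecreasing and continuous,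
scaling the whole price vector up by a factor `λ ≥ 1` can only shrink demand: for every
`y ∈ 𝒟(u, q)` there is `y' ∈ 𝒟(u, λ q)` with `y' ≤ y` componentwise. -/
theorem demand_decreases_under_uniform_price_scaling
    (D : ℕ) (hD : 0 < D)
    (a : Fin D → ℝ) (ha : ∀ d, 0 < a d)
    (g : ℝ → ℝ)
    (hgconc : ConcaveOn ℝ Set.univ g)
    (hgmono : Monotone g)
    (hgcont : Continuous g)
    (q : Fin D → ℝ) (hq : ∀ d, 0 < q d)
    (lam : ℝ) (hlam : 1 ≤ lam) :
    ∀ y ∈ demandSet (fun x => g (∑ d, a d * x d)) q,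
      ∃ y' ∈ demandSet (fun x => g (∑ d, a d * x d)) (fun d => lam * q d),
        y' ≤ y :=
  demand_decreases_under_uniform_price_scaling_general D a ha g hgcont q hq lam hlam
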